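/- arXiv:2405.17499 — 3 statements merged into one kernel-verified Lean document; each statement's English description precedes it below -/
import Mathlib

section
/- The number of distinct subsequences (including the empty sequence) of the alternating binary word ACAC... of length t equals F(t+2) - 1, where F denotes Fibonacci numbers with F(1)=1, F(2)=2; equivalently it equals the partial sum F(0)+F(1)+...+F(t) with F(0)=1. -/
open List Finset

/-- The `q`-bonacci numbers: `F_q(0)=1`, `F_q(t)=2^(t-1)` for `1 ≤ t ≤ q`,
and `F_q(t)` is the sum of the previous `q` terms for `t > q`. -/
def qbonacci (q : ℕ) : ℕ → ℕ
  | 0 => 1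
  | t + 1 =>
    if t + 1 ≤ q then 2 ^ t
    else ∑ i ∈ Finset.range q, qbonacci q (t - i)
  decreasing_by exact Nat.lt_succ_of_le (Nat.sub_le t i)

/-- The length-`t` word cycling through the alphabet `{0, 1, ..., q-1}`. -/
def cyc (q t : ℕ) : List ℕ := (List.range t).map (· % q)

/-- The alternating binary word `0,1,0,1,...` of length `t` (A=0, C=1). -/
def alt (t : ℕ) : List ℕ := (List.range t).map (· % 2)

/-- `tau q x` is the least `s` such that `x` is a subsequence of `cyc q s`. -/
noncomputable def tau (q : ℕ) (x : List ℕ) : ℕ := sInf {s | x <+ cyc q s}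

/-!
Appending a letter `a` to a word `w` adds the words `x ++ [a]` for the subsequences `x` of `w`;
such a word was already a subsequence of `w` exactly when `x` is a subsequence of the part of `w`
before its last `a`. In `alt (s + 3) = alt (s + 2) ++ [s % 2]` that part is `alt s`, so the number
`d t` of subsequences of `alt t` satisfies `d (s + 3) = 2 d (s + 2) - d s`, the recurrence of
`fib (t + 3) - 1`.
-/

section Subsequences

variable {α : Type*}

theorem concat_sublist_append_iff_of_notMem {x w v : List α} {a : α} (ha : a ∉ v) :
    x ++ [a] <+ w ++ v ↔ x ++ [a] <+ w := by
  refine ⟨fun h => ?_, fun h => h.trans (sublist_append_left w v)⟩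
  obtain ⟨l₁, l₂, hx, h₁, h₂⟩ := sublist_append_iff.mp h
  rcases l₂.eq_nil_or_concat with rfl | ⟨l, b, rfl⟩
  · simpa [hx] using h₁
  · rw [concat_eq_append] at hx h₂
    rw [← List.append_assoc] at hx
    obtain ⟨-, hab⟩ := append_inj' hx rfl
    cases hab
    exact absurd (h₂.subset (mem_append_right l (List.mem_singleton_self a))) ha

variable [DecidableEq α]

def subseqs (w : List α) : Finset (List α) := w.sublists.toFinset

@[simp]
theorem mem_subseqs {x w : List α} : x ∈ subseqs w ↔ x <+ w := by
  simp [subseqs]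

theorem subseqs_concat (w : List α) (a : α) :
    subseqs (w ++ [a]) = subseqs w ∪ (subseqs w).image (· ++ [a]) := by
  ext x
  simp [subseqs, sublists_concat]

theorem subseqs_inter_image_concat {u v : List α} {a : α} (ha : a ∉ v) :
    subseqs (u ++ [a] ++ v) ∩ (subseqs (u ++ [a] ++ v)).image (· ++ [a]) =
      (subseqs u).image (· ++ [a]) := by
  ext y
  simp only [Finset.mem_inter, Finset.mem_image, mem_subseqs]
  constructor
  · rintro ⟨hy, x, -, rfl⟩
    exact ⟨x, (append_sublist_append_right [a]).mp
      ((concat_sublist_append_iff_of_notMem ha).mp hy), rfl⟩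
  · rintro ⟨x, hx, rfl⟩
    have hxa : x ++ [a] <+ u ++ [a] ++ v :=
      ((append_sublist_append_right [a]).mpr hx).trans (sublist_append_left _ v)
    exact ⟨hxa, x, (sublist_append_left x [a]).trans hxa, rfl⟩

theorem card_subseqs_concat_add_card_subseqs {u v : List α} {a : α} (ha : a ∉ v) :
    #(subseqs (u ++ [a] ++ v ++ [a])) + #(subseqs u) = 2 * #(subseqs (u ++ [a] ++ v)) := by
  have hinj : Function.Injective (· ++ [a] : List α → List α) := append_left_injective [a]
  have h := card_union_add_card_inter (subseqs (u ++ [a] ++ v))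
    ((subseqs (u ++ [a] ++ v)).image (· ++ [a]))
  rw [← subseqs_concat, subseqs_inter_image_concat ha, card_image_of_injective _ hinj,
    card_image_of_injective _ hinj] at h
  omega

end Subsequences

theorem alt_succ (t : ℕ) : alt (t + 1) = alt t ++ [t % 2] := by
  simp [alt, List.range_succ]

theorem card_subseqs_alt_add_three (s : ℕ) :
    #(subseqs (alt (s + 3))) + #(subseqs (alt s)) = 2 * #(subseqs (alt (s + 2))) := by
  have hw : alt (s + 3) = alt s ++ [s % 2] ++ [(s + 1) % 2] ++ [s % 2] := by
    rw [alt_succ, alt_succ, alt_succ, Nat.add_mod_right]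
  have hv : s % 2 ∉ [(s + 1) % 2] := by simp only [List.mem_singleton]; omega
  rw [hw, card_subseqs_concat_add_card_subseqs hv, alt_succ, alt_succ]

theorem card_subseqs_alt_add_one : ∀ t : ℕ, #(subseqs (alt t)) + 1 = Nat.fib (t + 3)
  | 0 => by decide
  | 1 => by decide
  | 2 => by decide
  | s + 3 => by
    show _ = Nat.fib (s + 6)
    have hs : #(subseqs (alt s)) + 1 = Nat.fib (s + 3) := card_subseqs_alt_add_one s
    have hs₂ : #(subseqs (alt (s + 2))) + 1 = Nat.fib (s + 5) := card_subseqs_alt_add_one (s + 2)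
    have hfib₁ : Nat.fib (s + 5) = Nat.fib (s + 3) + Nat.fib (s + 4) := Nat.fib_add_two
    have hfib₂ : Nat.fib (s + 6) = Nat.fib (s + 4) + Nat.fib (s + 5) := Nat.fib_add_two
    have hrec := card_subseqs_alt_add_three s
    omega

theorem stmt1 (t : ℕ) :
    {x : List ℕ | x <+ alt t}.ncard = Nat.fib (t + 3) - 1 := by
  have hset : {x : List ℕ | x <+ alt t} = ↑(subseqs (alt t)) := by
    ext
    simp
  rw [hset, Set.ncard_coe_finset, ← card_subseqs_alt_add_one t, Nat.add_sub_cancel]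
end

section
/- For 1 <= t <= q, the number of nonempty words x over an alphabet of size q whose minimal synthesis time against the cyclic master lineup equals t (i.e., tau(x) = t) is exactly 2^{t-1}. -/
open List Finset

/-!
Within its first `q` letters the lineup has no repetitions: its prefix of length `n + 1 ≤ q` is
`0, 1, …, n`. So `tau x = n + 1` says exactly that `x` is a subsequence of `0, …, n` but not of
`0, …, n - 1`, i.e. `x` is a subsequence of `0, …, n - 1` followed by the letter `n`; there are
`2 ^ n` of these.
-/

namespace List

variable {α : Type*}

theorem sublist_append_singleton_and_not_sublist_iff {L x : List α} {a : α} (ha : a ∉ L) :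
    x <+ L ++ [a] ∧ ¬ x <+ L ↔ ∃ l, l <+ L ∧ l ++ [a] = x := by
  constructor
  · rintro ⟨hsub, hnot⟩
    obtain ⟨l, r, rfl, hl, hr⟩ := sublist_append_iff.mp hsub
    rcases sublist_singleton.mp hr with rfl | rfl
    · exact absurd (by simpa using hl) hnot
    · exact ⟨l, hl, rfl⟩
  · rintro ⟨l, hl, rfl⟩
    exact ⟨hl.append (Sublist.refl _), fun h => ha (h.subset (by simp))⟩

theorem ncard_setOf_sublist {L : List α} (hL : L.Nodup) :
    {l | l <+ L}.ncard = 2 ^ L.length := by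
  classical
  have hset : {l | l <+ L} = (L.sublists.toFinset : Set (List α)) := by
    ext l
    simp
  rw [hset, Set.ncard_coe_finset, toFinset_card_of_nodup (nodup_sublists.mpr hL),
    length_sublists]

end List

theorem cyc_eq_range {q s : ℕ} (h : s ≤ q) : cyc q s = List.range s :=
  (List.map_congr_left fun _ ha => Nat.mod_eq_of_lt ((List.mem_range.mp ha).trans_le h)).trans
    (List.map_id _)

theorem cyc_sublist_cyc (q : ℕ) {s s' : ℕ} (h : s ≤ s') : cyc q s <+ cyc q s' :=
  (List.range_sublist.mpr h).map _

theorem tau_eq_succ_iff (q n : ℕ) (x : List ℕ) :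
    tau q x = n + 1 ↔ x <+ cyc q (n + 1) ∧ ¬ x <+ cyc q n :=
  Nat.sInf_upward_closed_eq_succ_iff (fun _ _ h hx => hx.trans (cyc_sublist_cyc q h)) n

theorem stmt3 (q t : ℕ) (ht1 : 1 ≤ t) (htq : t ≤ q) :
    {x : List ℕ | x ≠ [] ∧ tau q x = t}.ncard = 2 ^ (t - 1) := by
  obtain ⟨n, rfl⟩ : ∃ n, t = n + 1 := ⟨t - 1, by omega⟩
  have hset : {x : List ℕ | x ≠ [] ∧ tau q x = n + 1} =
      (· ++ [n]) '' {l | l <+ List.range n} := by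
    ext x
    rw [Set.mem_ofPred_eq, tau_eq_succ_iff, cyc_eq_range htq, cyc_eq_range (by omega),
      List.range_succ, List.sublist_append_singleton_and_not_sublist_iff (by simp)]
    constructor
    · exact And.right
    · rintro ⟨l, hl, rfl⟩
      exact ⟨by simp, l, hl, rfl⟩
  rw [hset, Set.ncard_image_of_injective _ (List.append_left_injective [n]),
    List.ncard_setOf_sublist List.nodup_range, List.length_range, Nat.add_sub_cancel]
end

section
/- The number of pairs (M, x) with M a word of length t over an alphabet Sigma of size q and x a subsequence of M is at most q^t · (F_q(0) + F_q(1) + ... + F_q(t)). -/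
/-!
A nonempty subsequence `a :: y` of `M` has `y` a subsequence of the suffix of `M` after the first
occurrence of `a`. First occurrences of distinct letters are distinct positions, at most `min q n`
of them in a word of length `n`, and the bound for a suffix decreases with its starting position.
So, by induction on `n`, a word of length `n` has at most `S(n)` distinct subsequences whenever `S`
is monotone with `S(n) = 1 + ∑_{j < min q n} S(n - 1 - j)`; the partial sums of the `q`-bonacci
numbers are such an `S`. Summing over the `q ^ t` words gives the theorem.
-/

open List Finset

def qbonacciSum (q t : ℕ) : ℕ := ∑ i ∈ range (t + 1), qbonacci q i

lemma qbonacciSum_succ (q t : ℕ) :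
    qbonacciSum q (t + 1) = qbonacciSum q t + qbonacci q (t + 1) :=
  Finset.sum_range_succ _ _

lemma qbonacciSum_mono (q : ℕ) : Monotone (qbonacciSum q) :=
  fun _ _ h ↦ sum_le_sum_of_subset (Finset.range_subset_range.mpr (Nat.succ_le_succ h))

lemma qbonacciSum_eq_two_pow {q t : ℕ} (h : t ≤ q) : qbonacciSum q t = 2 ^ t := by
  induction t with
  | zero => simp [qbonacciSum, qbonacci]
  | succ t ih =>
    rw [qbonacciSum_succ, ih (Nat.le_of_succ_le h), qbonacci, if_pos h]
    ring

lemma qbonacciSum_eq_one_add_sum (q t : ℕ) :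
    qbonacciSum q t = 1 + ∑ j ∈ range (min q t), qbonacciSum q (t - (j + 1)) := by
  induction t with
  | zero => simp [qbonacciSum, qbonacci]
  | succ t ih =>
    rw [qbonacciSum_succ]
    rcases lt_or_ge t q with htq | hqt
    · rw [min_eq_right htq.le] at ih
      rw [min_eq_right htq, Finset.sum_range_succ', qbonacci, if_pos (show t + 1 ≤ q from htq),
        ← qbonacciSum_eq_two_pow htq.le]
      simp only [Nat.add_sub_add_right, Nat.add_sub_cancel]
      omega
    · rw [min_eq_left hqt] at ih
      rw [min_eq_left (Nat.le_succ_of_le hqt), ih, qbonacci, if_neg (by omega), add_assoc,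
        ← sum_add_distrib]
      congr 1
      refine sum_congr rfl fun j hj ↦ ?_
      have hjt : j < t := (Finset.mem_range.mp hj).trans_le hqt
      rw [show t + 1 - (j + 1) = t - (j + 1) + 1 by omega, qbonacciSum_succ,
        show t - (j + 1) + 1 = t - j by omega]

lemma sum_le_sum_range_card_of_antitone {h : ℕ → ℕ} (hh : Antitone h) (s : Finset ℕ) :
    ∑ i ∈ s, h i ≤ ∑ j ∈ range #s, h j := by
  induction s using Finset.induction_on_max with
  | empty => simp
  | insert a s has ih =>
    have ha : a ∉ s := fun h ↦ (has a h).false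
    have hcard : #s ≤ a := by
      simpa using card_le_card fun x hx ↦ Finset.mem_range.mpr (has x hx)
    rw [sum_insert ha, card_insert_of_notMem ha, Finset.sum_range_succ, add_comm]
    exact add_le_add ih (hh hcard)

lemma sublist_drop_idxOf_of_cons_sublist {α : Type*} [DecidableEq α] {a : α} {y M : List α}
    (h : a :: y <+ M) : y <+ M.drop (M.idxOf a + 1) := by
  induction M with
  | nil => simp at h
  | cons b M ih =>
    rcases cons_sublist_cons'.mp h with h' | ⟨rfl, h'⟩
    · by_cases hab : a = b
      · subst hab
        simpa [idxOf_cons_self] using (sublist_cons_self a y).trans h'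
      · simpa [idxOf_cons_ne _ (Ne.symm hab)] using ih h'
    · simpa [idxOf_cons_self] using h'

lemma sublists_toFinset_subset {α : Type*} [DecidableEq α] (M : List α) :
    M.sublists.toFinset ⊆ insert []
      (M.toFinset.biUnion fun a ↦ (M.drop (M.idxOf a + 1)).sublists.toFinset.image (a :: ·)) := by
  intro x hx
  rw [mem_toFinset, mem_sublists] at hx
  rcases x with _ | ⟨a, y⟩
  · exact mem_insert_self _ _
  · refine mem_insert_of_mem (mem_biUnion.mpr ⟨a, mem_toFinset.mpr (hx.subset mem_cons_self), ?_⟩)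
    exact mem_image.mpr
      ⟨y, mem_toFinset.mpr (mem_sublists.mpr (sublist_drop_idxOf_of_cons_sublist hx)), rfl⟩

theorem card_sublists_toFinset_le {α : Type*} [Fintype α] [DecidableEq α] (M : List α) :
    #M.sublists.toFinset ≤ qbonacciSum (Fintype.card α) M.length := by
  induction h : M.length using Nat.strong_induction_on generalizing M with
  | _ n ih =>
  set q := Fintype.card α
  let pos : α → ℕ := M.idxOf
  have hpos : ∀ a ∈ M.toFinset, pos a < n := fun a ha ↦
    h ▸ idxOf_lt_length_iff.mpr (mem_toFinset.mp ha)
  have hinj : Set.InjOn pos M.toFinset := fun a ha _ _ hab ↦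
    (idxOf_inj (mem_toFinset.mp ha)).mp hab
  have hcard_q : #(M.toFinset.image pos) ≤ q := by
    rw [card_image_of_injOn hinj]; exact card_le_univ _
  have hcard_n : #(M.toFinset.image pos) ≤ n := by
    refine (card_le_card fun i hi ↦ ?_).trans_eq (card_range n)
    obtain ⟨a, ha, rfl⟩ := mem_image.mp hi
    exact Finset.mem_range.mpr (hpos a ha)
  have hanti : Antitone fun i ↦ qbonacciSum q (n - (i + 1)) := fun _ _ hij ↦
    qbonacciSum_mono q (by omega)
  calc #M.sublists.toFinset
      ≤ 1 + ∑ a ∈ M.toFinset, #((M.drop (pos a + 1)).sublists.toFinset.image (a :: ·)) :=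
        (card_le_card (sublists_toFinset_subset M)).trans
          ((card_insert_le _ _).trans (by rw [add_comm]; gcongr; exact card_biUnion_le))
    _ ≤ 1 + ∑ a ∈ M.toFinset, qbonacciSum q (n - (pos a + 1)) := by
        gcongr with a ha
        refine card_image_le.trans ?_
        have hlen : (M.drop (pos a + 1)).length = n - (pos a + 1) := by rw [length_drop, h]
        exact ih _ (by have := hpos a ha; omega) _ hlen
    _ = 1 + ∑ i ∈ M.toFinset.image pos, qbonacciSum q (n - (i + 1)) := by
        rw [sum_image hinj]
    _ ≤ 1 + ∑ j ∈ range (min q n), qbonacciSum q (n - (j + 1)) := by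
        refine Nat.add_le_add_left ((sum_le_sum_range_card_of_antitone hanti _).trans ?_) 1
        exact sum_le_sum_of_subset (Finset.range_subset_range.mpr (le_min hcard_q hcard_n))
    _ = qbonacciSum q n := (qbonacciSum_eq_one_add_sum q n).symm

theorem stmt11 {α : Type*} [Fintype α] (q t : ℕ) (hcard : Fintype.card α = q) :
    {p : List α × List α | p.1.length = t ∧ p.2 <+ p.1}.ncard
      ≤ q ^ t * ∑ i ∈ Finset.range (t + 1), qbonacci q i := by
  classical
  subst hcard
  let pairs : Finset (List α × List α) := (univ : Finset (Fin t → α)).biUnion fun f ↦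
    (ofFn f).sublists.toFinset.image (ofFn f, ·)
  have hsub : {p : List α × List α | p.1.length = t ∧ p.2 <+ p.1} ⊆ pairs := by
    rintro ⟨M, x⟩ ⟨rfl, hx⟩
    simp only [pairs, coe_biUnion, coe_image, Set.mem_iUnion, Set.mem_image, mem_coe,
      mem_toFinset, mem_sublists]
    exact ⟨M.get, mem_univ _, x, by rwa [ofFn_get], by rw [ofFn_get]⟩
  calc _ ≤ #pairs := by simpa using Set.ncard_le_ncard hsub pairs.finite_toSet
    _ ≤ ∑ f : Fin t → α, #((ofFn f).sublists.toFinset.image (ofFn f, ·)) := card_biUnion_le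
    _ ≤ ∑ _f : Fin t → α, qbonacciSum (Fintype.card α) t := by
        gcongr with f
        simpa using card_image_le.trans (card_sublists_toFinset_le (ofFn f))
    _ = _ := by simp [qbonacciSum]
end
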